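/- arXiv:2408.01555 — 6 statements merged into one kernel-verified Lean document; each statement's English description precedes it below -/
import Mathlib

section
/- Let n ≥ 1, let X_1,…,X_n be independent real-valued random variables on a probability space, and set S_0 = 0 and S_k = X_1 + … + X_k for 1 ≤ k ≤ n. Let f : {0,…,n} → ℝ, let t₀ ∈ {0,…,n}, and let z₁, z₂, x₀ ∈ ℝ. Then P( (∀ k ∈ {0,…,n}: z₁ + S_k + f(k) ≥ 0) and z₁ + S_n + f(n) ∈ [z₂ − 1, z₂] ) ≥ P( (∀ k ∈ {0,…,t₀}: (z₁ − 1) + S_k + f(k) ≥ 0) and (z₁ − 1) + S_{t₀} + f(t₀) ∈ [x₀ + f(t₀) − 1, x₀ + f(t₀)] ) · inf_{x ∈ [x₀, x₀ + 1]} P( (∀ k ∈ {t₀,…,n}: x + (S_k − S_{t₀}) + f(k) ≥ 0) and x + (S_n − S_{t₀}) + f(n) ∈ [z₂ − 1, z₂] ). -/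
/-!
Cut the walk at `t₀`: the increments before and after `t₀` are independent blocks. If the first
block keeps the walk started at `z₁ - 1` above the barrier and lands it in the window, then the walk
started at `z₁` stays above the barrier up to `t₀` and sits at a height `z₁ + S_{t₀} ∈ [x₀, x₀ + 1]`
there; from that height the second block succeeds with probability at least the infimum.
Integrating this bound over the law of the first block (the joint law is the product law) gives
the claim.
-/

open MeasureTheory ProbabilityTheory Finset
open scoped ENNReal

namespace ProbabilityTheory

variable {Ω α β : Type*} {mΩ : MeasurableSpace Ω} {mα : MeasurableSpace α} {mβ : MeasurableSpace β}
  {μ : Measure Ω}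

theorem iIndepFun.indepFun_castAdd_natAdd {t m : ℕ} {X : Fin (t + m) → Ω → β}
    (hX : ∀ i, Measurable (X i)) (h : iIndepFun X μ) :
    IndepFun (fun ω (i : Fin t) => X (Fin.castAdd m i) ω)
      (fun ω (i : Fin m) => X (Fin.natAdd t i) ω) μ := by
  let S : Finset (Fin (t + m)) := univ.filter fun i => (i : ℕ) < t
  let T : Finset (Fin (t + m)) := univ.filter fun i => ¬ (i : ℕ) < t
  have hS : Measurable fun (w : S → β) (i : Fin t) => w ⟨Fin.castAdd m i, by simp [S]⟩ :=
    measurable_pi_lambda _ fun i => measurable_pi_apply _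
  have hT : Measurable fun (w : T → β) (i : Fin m) => w ⟨Fin.natAdd t i, by simp [T]⟩ :=
    measurable_pi_lambda _ fun i => measurable_pi_apply _
  exact (h.indepFun_finset S T (disjoint_filter_filter_not _ _ _) hX).comp hS hT

theorem IndepFun.measure_preimage_mul_le_measure_prodMk_preimage [IsFiniteMeasure μ]
    {Y : Ω → α} {Z : Ω → β} (hYZ : IndepFun Y Z μ)
    (hY : AEMeasurable Y μ) (hZ : AEMeasurable Z μ) {A : Set α} (hA : MeasurableSet A)
    {D : Set (α × β)} (hD : MeasurableSet D) {c : ℝ≥0∞}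
    (hc : ∀ y ∈ A, c ≤ μ (Z ⁻¹' (Prod.mk y ⁻¹' D))) :
    μ (Y ⁻¹' A) * c ≤ μ ((fun ω => (Y ω, Z ω)) ⁻¹' D) := by
  have hslice : ∀ y ∈ A, c ≤ μ.map Z (Prod.mk y ⁻¹' D) := fun y hy => by
    rw [Measure.map_apply_of_aemeasurable hZ (measurable_prodMk_left hD)]
    exact hc y hy
  calc μ (Y ⁻¹' A) * c = ∫⁻ y, A.indicator (fun _ => c) y ∂μ.map Y := by
        rw [lintegral_indicator_const hA, Measure.map_apply_of_aemeasurable hY hA, mul_comm]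
    _ ≤ ∫⁻ y, μ.map Z (Prod.mk y ⁻¹' D) ∂μ.map Y := by
        refine lintegral_mono fun y => ?_
        by_cases hy : y ∈ A
        · simpa [hy] using hslice y hy
        · simp [hy]
    _ = μ ((fun ω => (Y ω, Z ω)) ⁻¹' D) := by
        rw [← Measure.prod_apply hD, ← (indepFun_iff_map_prod_eq_prod_map_map hY hZ).mp hYZ,
          Measure.map_apply_of_aemeasurable (hY.prodMk hZ) hD]

end ProbabilityTheory

noncomputable def prefixSum {t : ℕ} (y : Fin t → ℝ) (k : ℕ) : ℝ :=
  ∑ i ∈ univ.filter (fun i : Fin t => (i : ℕ) < k), y i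

theorem measurable_prefixSum (t k : ℕ) : Measurable fun y : Fin t → ℝ => prefixSum y k :=
  Finset.measurable_sum _ fun i _ => measurable_pi_apply i

theorem prefixSum_eq_sum_range (w : ℕ → ℝ) {t k : ℕ} (hk : k ≤ t) :
    prefixSum (fun i : Fin t => w i) k = ∑ j ∈ range k, w j := by
  rw [prefixSum, Finset.sum_filter, Fin.sum_univ_eq_sum_range (fun j => if j < k then w j else 0),
    ← Finset.sum_filter]
  congr 1
  ext j
  simp only [mem_filter, mem_range]
  omega

theorem prefixSum_append_of_le {t m k : ℕ} (u : Fin t → ℝ) (v : Fin m → ℝ) (hk : k ≤ t) :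
    prefixSum (Fin.append u v) k = prefixSum u k := by
  have : ∀ i : Fin m, ¬ t + (i : ℕ) < k := fun i => by omega
  simp [prefixSum, Finset.sum_filter, Fin.sum_univ_add, this]

theorem prefixSum_append_add {t m : ℕ} (u : Fin t → ℝ) (v : Fin m → ℝ) (k : ℕ) :
    prefixSum (Fin.append u v) (t + k) = prefixSum u t + prefixSum v k := by
  have : ∀ i : Fin t, (i : ℕ) < t + k := fun i => by omega
  simp [prefixSum, Finset.sum_filter, Fin.sum_univ_add, this]

/-- The barrier event with starting height `q.1`, barrier function `g` and terminal window `J`,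
for the walk with increments `q.2`. -/
def barrierSet (t : ℕ) (g : ℕ → ℝ) (J : Set ℝ) : Set (ℝ × (Fin t → ℝ)) :=
  {q | (∀ k ≤ t, 0 ≤ q.1 + prefixSum q.2 k + g k) ∧ q.1 + prefixSum q.2 t + g t ∈ J}

theorem measurableSet_barrierSet (t : ℕ) (g : ℕ → ℝ) {J : Set ℝ} (hJ : MeasurableSet J) :
    MeasurableSet (barrierSet t g J) := by
  have hpath : ∀ k, Measurable fun q : ℝ × (Fin t → ℝ) => q.1 + prefixSum q.2 k + g k :=
    fun k => (measurable_fst.add ((measurable_prefixSum t k).comp measurable_snd)).add_const _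
  rw [barrierSet, Set.ofPred_and]
  refine MeasurableSet.inter ?_ (hpath t hJ)
  simp only [Set.ofPred_forall]
  exact .iInter fun k => .iInter fun _ => measurableSet_le measurable_const (hpath k)

theorem append_mem_barrierSet {t m : ℕ} {g : ℕ → ℝ} {J : Set ℝ} {y : ℝ} {u : Fin t → ℝ}
    {v : Fin m → ℝ} (hu : ∀ k ≤ t, 0 ≤ y + prefixSum u k + g k)
    (hv : (y + prefixSum u t, v) ∈ barrierSet m (fun k => g (t + k)) J) :
    (y, Fin.append u v) ∈ barrierSet (t + m) g J := by
  obtain ⟨hv_above, hv_end⟩ := hv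
  refine ⟨fun k hk => ?_, ?_⟩
  · rcases le_total k t with hkt | htk
    · rw [prefixSum_append_of_le u v hkt]
      exact hu k hkt
    · obtain ⟨j, rfl⟩ := Nat.exists_eq_add_of_le htk
      rw [prefixSum_append_add, ← add_assoc]
      exact hv_above j (by omega)
  · rw [prefixSum_append_add, ← add_assoc]
    exact hv_end

section BarrierEvents

variable {Ω : Type*}

theorem setOf_barrier_eq_preimage (X : ℕ → Ω → ℝ) (t : ℕ) (y : ℝ) (g : ℕ → ℝ) (J : Set ℝ) :
    {ω | (∀ k ≤ t, 0 ≤ y + (∑ j ∈ range k, X j ω) + g k) ∧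
        y + (∑ j ∈ range t, X j ω) + g t ∈ J}
      = (fun ω (i : Fin t) => X i ω) ⁻¹' (Prod.mk y ⁻¹' barrierSet t g J) := by
  ext ω
  refine and_congr (forall₂_congr fun k hk => ?_) ?_
  · rw [prefixSum_eq_sum_range (X · ω) hk]
  · rw [prefixSum_eq_sum_range (X · ω) le_rfl]

theorem setOf_barrier_increments_eq_preimage (X : ℕ → Ω → ℝ) (t m : ℕ) (x : ℝ) (g : ℕ → ℝ)
    (J : Set ℝ) :
    {ω | (∀ k, t ≤ k → k ≤ t + m →
          0 ≤ x + ((∑ j ∈ range k, X j ω) - ∑ j ∈ range t, X j ω) + g k) ∧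
        x + ((∑ j ∈ range (t + m), X j ω) - ∑ j ∈ range t, X j ω) + g (t + m) ∈ J}
      = (fun ω (i : Fin m) => X (t + i) ω) ⁻¹'
          (Prod.mk x ⁻¹' barrierSet m (fun k => g (t + k)) J) := by
  ext ω
  have hincr : ∀ k ≤ m, prefixSum (fun i : Fin m => X (t + i) ω) k
      = (∑ j ∈ range (t + k), X j ω) - ∑ j ∈ range t, X j ω := fun k hk => by
    rw [prefixSum_eq_sum_range (fun j => X (t + j) ω) hk, sum_range_add_sub_sum_range]
  refine and_congr ⟨fun h k hk => ?_, fun h k htk hk => ?_⟩ ?_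
  · rw [hincr k hk]
    exact h (t + k) le_self_add (by omega)
  · obtain ⟨j, rfl⟩ := Nat.exists_eq_add_of_le htk
    simpa only [hincr j (by omega)] using h j (by omega)
  · rw [hincr m le_rfl]

end BarrierEvents

theorem barrier_split_general
    {Ω : Type*} [MeasurableSpace Ω] (μ : Measure Ω) [IsProbabilityMeasure μ]
    (n : ℕ) (X : ℕ → Ω → ℝ)
    (hmeas : ∀ j, Measurable (X j))
    (hindep : iIndepFun (fun j : Fin n => X j) μ)
    (f : ℕ → ℝ) (t₀ : ℕ) (ht₀ : t₀ ≤ n) (z₁ z₂ x₀ : ℝ) :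
    μ {ω | (∀ k ≤ n, 0 ≤ z₁ + (∑ j ∈ Finset.range k, X j ω) + f k) ∧
        z₁ + (∑ j ∈ Finset.range n, X j ω) + f n ∈ Set.Icc (z₂ - 1) z₂}
      ≥ μ {ω | (∀ k ≤ t₀, 0 ≤ (z₁ - 1) + (∑ j ∈ Finset.range k, X j ω) + f k) ∧
            (z₁ - 1) + (∑ j ∈ Finset.range t₀, X j ω) + f t₀
              ∈ Set.Icc (x₀ + f t₀ - 1) (x₀ + f t₀)}
        * ⨅ x : Set.Icc x₀ (x₀ + 1),
            μ {ω | (∀ k, t₀ ≤ k → k ≤ n →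
                0 ≤ (x : ℝ) + ((∑ j ∈ Finset.range k, X j ω)
                  - ∑ j ∈ Finset.range t₀, X j ω) + f k) ∧
              (x : ℝ) + ((∑ j ∈ Finset.range n, X j ω)
                  - ∑ j ∈ Finset.range t₀, X j ω) + f n ∈ Set.Icc (z₂ - 1) z₂} := by
  obtain ⟨m, rfl⟩ := Nat.exists_eq_add_of_le ht₀
  simp only [setOf_barrier_eq_preimage, setOf_barrier_increments_eq_preimage, ge_iff_le]
  set B₂ := barrierSet m (fun k => f (t₀ + k)) (Set.Icc (z₂ - 1) z₂)
  set A := Prod.mk (z₁ - 1) ⁻¹' barrierSet t₀ f (Set.Icc (x₀ + f t₀ - 1) (x₀ + f t₀))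
  set D := Prod.fst ⁻¹' A ∩
    (fun p : (Fin t₀ → ℝ) × (Fin m → ℝ) => (z₁ + prefixSum p.1 t₀, p.2)) ⁻¹' B₂
  have hA : MeasurableSet A :=
    measurable_prodMk_left (measurableSet_barrierSet _ _ measurableSet_Icc)
  have hD : MeasurableSet D := (measurable_fst hA).inter <|
    (((measurable_prefixSum t₀ t₀).comp measurable_fst).const_add z₁ |>.prodMk measurable_snd)
      (measurableSet_barrierSet _ _ measurableSet_Icc)
  have hY : Measurable fun ω (i : Fin t₀) => X i ω := measurable_pi_lambda _ fun i => hmeas i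
  have hZ : Measurable fun ω (i : Fin m) => X (t₀ + i) ω :=
    measurable_pi_lambda _ fun i => hmeas _
  have hYZ := hindep.indepFun_castAdd_natAdd fun i => hmeas i
  refine (hYZ.measure_preimage_mul_le_measure_prodMk_preimage hY.aemeasurable hZ.aemeasurable
    hA hD fun u hu => ?_).trans (measure_mono ?_)
  · have hx : z₁ + prefixSum u t₀ ∈ Set.Icc x₀ (x₀ + 1) := by
      obtain ⟨-, h₁, h₂⟩ := hu
      constructor <;> linarith
    have hslice : Prod.mk u ⁻¹' D = Prod.mk (z₁ + prefixSum u t₀) ⁻¹' B₂ := by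
      ext v; simp [D, hu]
    rw [hslice]
    exact iInf_le (fun x : Set.Icc x₀ (x₀ + 1) => μ _) ⟨_, hx⟩
  · rintro ω ⟨hω₁, hω₂⟩
    show (z₁, fun i : Fin (t₀ + m) => X i ω) ∈ barrierSet _ _ _
    rw [← Fin.append_castAdd_natAdd (f := fun i : Fin (t₀ + m) => X i ω)]
    exact append_mem_barrierSet (fun k hk => by linarith [hω₁.1 k hk]) hω₂

/-- Barrier-splitting lemma (discrete, independent increments):
the probability of staying above the barrier `-f` on `{0,…,n}` starting at `z₁`
and landing in `[z₂-1, z₂]` is at least the product of the barrier probability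
on `{0,…,t₀}` (starting at `z₁ - 1`, landing in `[x₀ + f t₀ - 1, x₀ + f t₀]`)
and the infimum over starting heights `x ∈ [x₀, x₀+1]` of the barrier probability
for the increments on `{t₀,…,n}`. -/
theorem barrier_split
    {Ω : Type*} [MeasurableSpace Ω] (μ : Measure Ω) [IsProbabilityMeasure μ]
    (n : ℕ) (hn : 1 ≤ n) (X : ℕ → Ω → ℝ)
    (hmeas : ∀ j, Measurable (X j))
    (hindep : iIndepFun (fun j : Fin n => X j) μ)
    (f : ℕ → ℝ) (t₀ : ℕ) (ht₀ : t₀ ≤ n) (z₁ z₂ x₀ : ℝ) :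
    μ {ω | (∀ k ≤ n, 0 ≤ z₁ + (∑ j ∈ Finset.range k, X j ω) + f k) ∧
        z₁ + (∑ j ∈ Finset.range n, X j ω) + f n ∈ Set.Icc (z₂ - 1) z₂}
      ≥ μ {ω | (∀ k ≤ t₀, 0 ≤ (z₁ - 1) + (∑ j ∈ Finset.range k, X j ω) + f k) ∧
            (z₁ - 1) + (∑ j ∈ Finset.range t₀, X j ω) + f t₀
              ∈ Set.Icc (x₀ + f t₀ - 1) (x₀ + f t₀)}
        * ⨅ x : Set.Icc x₀ (x₀ + 1),
            μ {ω | (∀ k, t₀ ≤ k → k ≤ n →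
                0 ≤ (x : ℝ) + ((∑ j ∈ Finset.range k, X j ω)
                  - ∑ j ∈ Finset.range t₀, X j ω) + f k) ∧
              (x : ℝ) + ((∑ j ∈ Finset.range n, X j ω)
                  - ∑ j ∈ Finset.range t₀, X j ω) + f n ∈ Set.Icc (z₂ - 1) z₂} :=
  barrier_split_general μ n X hmeas hindep f t₀ ht₀ z₁ z₂ x₀
end

section
/- Let μ ∈ ℝ, σ > 0 and 0 ≤ α ≤ β. Then for every z ≥ μ: sup_{v ∈ [0, α]} g_{μ+v, σ²}(z) ≤ exp( β² / (2σ²) ) · inf_{v ∈ [α, β]} g_{μ+v, σ²}(z). -/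
/-! For a point `z ≥ μ`, moving the mean from `μ + u` up to `μ + w` raises the squared distance
to `z` by at most `w² - u² ≤ w²`, so the density drops by at most the factor `exp (w² / (2σ2))`.
Over the offsets `w ∈ [α, β]` this factor is at most `exp (β² / (2σ²))`. -/

/-- The Gaussian density with mean `μ` and variance `σ2`. -/
noncomputable def gaussDensity (μ σ2 x : ℝ) : ℝ :=
  (Real.sqrt (2 * Real.pi * σ2))⁻¹ * Real.exp (-(x - μ) ^ 2 / (2 * σ2))

lemma sq_sub_le_sq_sub_add_sq {t u w : ℝ} (ht : 0 ≤ t) (huw : u ≤ w) :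
    (t - w) ^ 2 ≤ (t - u) ^ 2 + w ^ 2 := by
  nlinarith [mul_nonneg (sub_nonneg.2 huw) ht, sq_nonneg u]

lemma gaussDensity_le_exp_mul_gaussDensity {μ σ2 z u w : ℝ} (hσ2 : 0 ≤ σ2) (hz : μ ≤ z)
    (huw : u ≤ w) :
    gaussDensity (μ + u) σ2 z ≤ Real.exp (w ^ 2 / (2 * σ2)) * gaussDensity (μ + w) σ2 z := by
  have hexp : -(z - (μ + u)) ^ 2 / (2 * σ2) ≤ w ^ 2 / (2 * σ2) + -(z - (μ + w)) ^ 2 / (2 * σ2) := by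
    rw [← add_div]
    gcongr
    have := sq_sub_le_sq_sub_add_sq (sub_nonneg.2 hz) huw
    rw [sub_add_eq_sub_sub, sub_add_eq_sub_sub]
    linarith
  unfold gaussDensity
  rw [mul_left_comm, ← Real.exp_add]
  gcongr

lemma ciSup_le_mul_ciInf {ι κ : Type*} [Nonempty ι] [Nonempty κ] {f : ι → ℝ} {g : κ → ℝ}
    {c : ℝ} (hc : 0 ≤ c) (h : ∀ i j, f i ≤ c * g j) : ⨆ i, f i ≤ c * ⨅ j, g j := by
  rw [Real.mul_iInf_of_nonneg hc]
  exact ciSup_le fun i ↦ le_ciInf (h i)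

theorem gaussian_density_mean_shift_comparison_general
    (μ σ α β z : ℝ) (hα : 0 ≤ α) (hαβ : α ≤ β) (hz : μ ≤ z) :
    (⨆ v : Set.Icc (0 : ℝ) α, gaussDensity (μ + (v : ℝ)) (σ ^ 2) z)
      ≤ Real.exp (β ^ 2 / (2 * σ ^ 2)) *
        ⨅ v : Set.Icc α β, gaussDensity (μ + (v : ℝ)) (σ ^ 2) z := by
  have : Nonempty (Set.Icc (0 : ℝ) α) := ⟨⟨0, le_rfl, hα⟩⟩
  have : Nonempty (Set.Icc α β) := ⟨⟨α, le_rfl, hαβ⟩⟩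
  refine ciSup_le_mul_ciInf (Real.exp_pos _).le fun ⟨u, _, huα⟩ ⟨w, hαw, hwβ⟩ ↦ ?_
  have hw : 0 ≤ w := hα.trans hαw
  calc gaussDensity (μ + u) (σ ^ 2) z
      ≤ Real.exp (w ^ 2 / (2 * σ ^ 2)) * gaussDensity (μ + w) (σ ^ 2) z :=
        gaussDensity_le_exp_mul_gaussDensity (sq_nonneg σ) hz (huα.trans hαw)
    _ ≤ Real.exp (β ^ 2 / (2 * σ ^ 2)) * gaussDensity (μ + w) (σ ^ 2) z := by
        unfold gaussDensity
        gcongr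

/-- Gaussian density comparison: for `z ≥ μ`, among Gaussian densities with means
`μ + v`, the largest one with offset `v ∈ [0, α]` exceeds the smallest one with
offset `v ∈ [α, β]` by at most the factor `exp (β² / (2σ²))`. -/
theorem gaussian_density_mean_shift_comparison
    (μ σ α β z : ℝ) (hσ : 0 < σ) (hα : 0 ≤ α) (hαβ : α ≤ β) (hz : μ ≤ z) :
    (⨆ v : Set.Icc (0 : ℝ) α, gaussDensity (μ + (v : ℝ)) (σ ^ 2) z)
      ≤ Real.exp (β ^ 2 / (2 * σ ^ 2)) *
        ⨅ v : Set.Icc α β, gaussDensity (μ + (v : ℝ)) (σ ^ 2) z :=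
  gaussian_density_mean_shift_comparison_general μ σ α β z hα hαβ hz
end

section
/- For all constants 0 < c₁ ≤ C₁ and M > 0 there exist K > 0 and t₀ ≥ 3 such that for all t ≥ t₀, all σ² ∈ [c₁ t, C₁ t] and all μ ∈ ℝ with |μ| ≤ M·√(t·log t): ∫_0^{t^{1/3}} g_{μ,σ²}(z) dz ≤ K · t^{−1/15} · e^{(log t)^{2/3}} · ∫_{t^{1/3}}^{t^{2/5}} g_{μ,σ²}(z) dz. -/
/-!
For `0 ≤ x ≤ a ≤ y ≤ b` one has `(y - μ)² - (x - μ)² ≤ 2 (b² + b |μ|)`, so once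
`σ² ≥ b² + b |μ|` the Gaussian density on `[0, a]` is at most `e` times its value at
any point of `[a, b]`. Averaging gives `∫₀ᵃ g ≤ e · a / (b - a) · ∫ₐᵇ g`. With `a = t^{1/3}`
and `b = t^{2/5}` the ratio `a / b` is `t^{-1/15}`, and
`b² + b |μ| = O(t^{9/10} √(log t)) = o(t)` is below `c₁ t ≤ σ²` for large `t`.
-/

open Real Filter Set MeasureTheory intervalIntegral Topology

lemma gaussDensity_nonneg (μ σ2 x : ℝ) : 0 ≤ gaussDensity μ σ2 x := by
  unfold gaussDensity
  positivity

lemma continuous_gaussDensity (μ σ2 : ℝ) : Continuous (gaussDensity μ σ2) := by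
  unfold gaussDensity
  fun_prop

lemma gaussDensity_eq_exp_mul (μ σ2 x y : ℝ) :
    gaussDensity μ σ2 x =
      exp (((y - μ) ^ 2 - (x - μ) ^ 2) / (2 * σ2)) * gaussDensity μ σ2 y := by
  unfold gaussDensity
  rw [mul_left_comm, ← exp_add]
  congr 2
  ring

lemma sub_sq_sub_sub_sq_le {x y b : ℝ} (μ : ℝ) (hx : 0 ≤ x) (hxy : x ≤ y) (hyb : y ≤ b) :
    (y - μ) ^ 2 - (x - μ) ^ 2 ≤ 2 * (b ^ 2 + b * |μ|) := by
  have hμ : -|μ| ≤ μ := neg_abs_le μ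
  calc (y - μ) ^ 2 - (x - μ) ^ 2 = (y - x) * (y + x - 2 * μ) := by ring
    _ ≤ (y - x) * (2 * b + 2 * |μ|) := by gcongr; linarith
    _ ≤ b * (2 * b + 2 * |μ|) := by gcongr <;> linarith [abs_nonneg μ]
    _ = 2 * (b ^ 2 + b * |μ|) := by ring

lemma gaussDensity_le_exp_one_mul {μ σ2 x y b : ℝ} (hσ : 0 < σ2)
    (hb : b ^ 2 + b * |μ| ≤ σ2) (hx : 0 ≤ x) (hxy : x ≤ y) (hyb : y ≤ b) :
    gaussDensity μ σ2 x ≤ exp 1 * gaussDensity μ σ2 y := by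
  rw [gaussDensity_eq_exp_mul μ σ2 x y]
  gcongr
  · exact gaussDensity_nonneg μ σ2 y
  · rw [div_le_one (by positivity)]
    linarith [sub_sq_sub_sub_sq_le μ hx hxy hyb]

lemma mul_integral_le_mul_integral_of_le_mul {f : ℝ → ℝ} {p q r s C : ℝ}
    (hpq : p ≤ q) (hrs : r ≤ s) (hf₁ : IntervalIntegrable f volume p q)
    (hf₂ : IntervalIntegrable f volume r s)
    (h : ∀ x ∈ Icc p q, ∀ y ∈ Icc r s, f x ≤ C * f y) :
    (s - r) * ∫ x in p..q, f x ≤ (q - p) * C * ∫ y in r..s, f y := by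
  have hpoint : ∀ y ∈ Icc r s, ∫ x in p..q, f x ≤ (q - p) * C * f y := fun y hy => by
    calc ∫ x in p..q, f x ≤ ∫ _ in p..q, C * f y :=
          integral_mono_on hpq hf₁ intervalIntegrable_const fun x hx => h x hx y hy
      _ = (q - p) * C * f y := by rw [intervalIntegral.integral_const, smul_eq_mul, mul_assoc]
  calc (s - r) * ∫ x in p..q, f x = ∫ _ in r..s, ∫ x in p..q, f x := by
        rw [intervalIntegral.integral_const, smul_eq_mul]
    _ ≤ ∫ y in r..s, (q - p) * C * f y :=
        integral_mono_on hrs intervalIntegrable_const (hf₂.const_mul _) hpoint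
    _ = (q - p) * C * ∫ y in r..s, f y := integral_const_mul _ _

lemma integral_gaussDensity_le {μ σ2 a b : ℝ} (hσ : 0 < σ2) (ha : 0 < a) (hab : 2 * a ≤ b)
    (hb : b ^ 2 + b * |μ| ≤ σ2) :
    ∫ z in (0 : ℝ)..a, gaussDensity μ σ2 z ≤
      2 * exp 1 * (a / b) * ∫ z in a..b, gaussDensity μ σ2 z := by
  have hb0 : 0 < b := by linarith
  have hcompare := mul_integral_le_mul_integral_of_le_mul (f := gaussDensity μ σ2)
    (C := exp 1) ha.le (by linarith) ((continuous_gaussDensity μ σ2).intervalIntegrable _ _)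
    ((continuous_gaussDensity μ σ2).intervalIntegrable _ _)
    fun x hx y hy => gaussDensity_le_exp_one_mul hσ hb hx.1 (hx.2.trans hy.1) hy.2
  have hI : 0 ≤ ∫ z in (0 : ℝ)..a, gaussDensity μ σ2 z :=
    integral_nonneg ha.le fun z _ => gaussDensity_nonneg μ σ2 z
  rw [mul_div_assoc', div_mul_eq_mul_div, le_div_iff₀ hb0]
  nlinarith

lemma tendsto_rpow_sq_mul_log_div_atTop {p : ℝ} (hp : p < 1 / 2) :
    Tendsto (fun t : ℝ => (t ^ p) ^ 2 * log t / t) atTop (𝓝 0) := by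
  refine (isLittleO_log_rpow_atTop (by linarith : 0 < 1 - 2 * p)).tendsto_div_nhds_zero
    |>.congr' ?_
  filter_upwards [eventually_gt_atTop 0] with t ht
  have hsplit : t = (t ^ p) ^ 2 * t ^ (1 - 2 * p) := by
    rw [← rpow_natCast, ← rpow_mul ht.le, ← rpow_add ht, Nat.cast_ofNat,
      show p * 2 + (1 - 2 * p) = 1 by ring, rpow_one]
  rw [div_eq_div_iff (by positivity) ht.ne']
  linear_combination log t * hsplit

lemma eventually_rpow_sq_add_rpow_mul_abs_le {p : ℝ} (hp : p < 1 / 2) (M : ℝ) {c : ℝ}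
    (hc : 0 < c) :
    ∀ᶠ t : ℝ in atTop, ∀ μ : ℝ, |μ| ≤ M * √(t * log t) → (t ^ p) ^ 2 + t ^ p * |μ| ≤ c * t := by
  set δ : ℝ → ℝ := fun t => (t ^ p) ^ 2 * log t / t
  have hsmall : Tendsto (fun t => δ t + M * √(δ t)) atTop (𝓝 0) := by
    simpa using (tendsto_rpow_sq_mul_log_div_atTop hp).add
      ((continuous_sqrt.tendsto 0).comp (tendsto_rpow_sq_mul_log_div_atTop hp) |>.const_mul M)
  filter_upwards [hsmall.eventually_le_const hc, eventually_gt_atTop 0,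
    tendsto_log_atTop.eventually_ge_atTop 1] with t hct ht hlog μ hμ
  have hδt : δ t * t = (t ^ p) ^ 2 * log t := by
    simp only [δ]
    field_simp
  set b := t ^ p
  have hb : 0 ≤ b := by positivity
  have hsq : b ^ 2 ≤ δ t * t := hδt ▸ le_mul_of_one_le_right (sq_nonneg b) hlog
  have hmul : b * |μ| ≤ M * √(δ t) * t := by
    calc b * |μ| ≤ b * (M * √(t * log t)) := by gcongr
      _ = M * √(b ^ 2 * (t * log t)) := by rw [sqrt_mul (sq_nonneg b), sqrt_sq hb]; ring
      _ = M * √(δ t * t ^ 2) := by congr 2; linear_combination -t * hδt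
      _ = M * √(δ t) * t := by rw [sqrt_mul' _ (sq_nonneg t), sqrt_sq ht.le, mul_assoc]
  calc b ^ 2 + b * |μ| ≤ δ t * t + M * √(δ t) * t := add_le_add hsq hmul
    _ = (δ t + M * √(δ t)) * t := by ring
    _ ≤ c * t := by gcongr

theorem gaussian_initial_segment_comparison_general
    (c₁ C₁ M : ℝ) (hc : 0 < c₁) :
    ∃ K t₀ : ℝ, 0 < K ∧ 3 ≤ t₀ ∧
      ∀ t : ℝ, t₀ ≤ t → ∀ σ2 : ℝ, σ2 ∈ Set.Icc (c₁ * t) (C₁ * t) →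
      ∀ μ : ℝ, |μ| ≤ M * Real.sqrt (t * Real.log t) →
        (∫ z in (0 : ℝ)..(t ^ ((1 : ℝ) / 3)), gaussDensity μ σ2 z) ≤
          K * t ^ (-(1 : ℝ) / 15) * Real.exp ((Real.log t) ^ ((2 : ℝ) / 3)) *
            ∫ z in (t ^ ((1 : ℝ) / 3))..(t ^ ((2 : ℝ) / 5)), gaussDensity μ σ2 z := by
  have hratio : ∀ᶠ t : ℝ in atTop, t ^ (-(1 : ℝ) / 15) ≤ 1 / 2 := by
    simpa [neg_div] using (tendsto_rpow_neg_atTop (by norm_num : (0 : ℝ) < 1 / 15))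
      |>.eventually_le_const (by norm_num : (0 : ℝ) < 1 / 2)
  have hvariance := eventually_rpow_sq_add_rpow_mul_abs_le
    (by norm_num : (2 : ℝ) / 5 < 1 / 2) M hc
  obtain ⟨t₀, ht₀⟩ := eventually_atTop.mp (hvariance.and hratio)
  refine ⟨2 * exp 1, max t₀ 3, by positivity, le_max_right _ _, fun t ht σ2 hσ2 μ hμ => ?_⟩
  obtain ⟨hlarge, hsmall⟩ := ht₀ t (le_of_max_le_left ht)
  have ht3 : 3 ≤ t := le_of_max_le_right ht
  have ht0 : 0 < t := by linarith
  have hsplit : t ^ ((1 : ℝ) / 3) = t ^ (-(1 : ℝ) / 15) * t ^ ((2 : ℝ) / 5) := by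
    rw [← rpow_add ht0]
    norm_num
  have hσ : (t ^ ((2 : ℝ) / 5)) ^ 2 + t ^ ((2 : ℝ) / 5) * |μ| ≤ σ2 :=
    (hlarge μ hμ).trans hσ2.1
  have hab : 2 * t ^ ((1 : ℝ) / 3) ≤ t ^ ((2 : ℝ) / 5) := by
    rw [hsplit]
    nlinarith [rpow_pos_of_pos ht0 ((2 : ℝ) / 5)]
  have hσpos : 0 < σ2 := lt_of_lt_of_le (by positivity) hσ2.1
  calc ∫ z in (0 : ℝ)..(t ^ ((1 : ℝ) / 3)), gaussDensity μ σ2 z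
      ≤ 2 * exp 1 * (t ^ ((1 : ℝ) / 3) / t ^ ((2 : ℝ) / 5)) *
          ∫ z in (t ^ ((1 : ℝ) / 3))..(t ^ ((2 : ℝ) / 5)), gaussDensity μ σ2 z :=
        integral_gaussDensity_le hσpos (by positivity) hab hσ
    _ = 2 * exp 1 * t ^ (-(1 : ℝ) / 15) * 1 *
          ∫ z in (t ^ ((1 : ℝ) / 3))..(t ^ ((2 : ℝ) / 5)), gaussDensity μ σ2 z := by
        rw [hsplit, mul_div_cancel_right₀ _ (by positivity), mul_one]
    _ ≤ _ := by
        gcongr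
        · exact integral_nonneg (by linarith [rpow_pos_of_pos ht0 ((1 : ℝ) / 3)])
            fun z _ => gaussDensity_nonneg μ σ2 z
        · exact one_le_exp (rpow_nonneg (log_nonneg (by linarith)) _)

/-- Gaussian integral comparison: when the variance is of order `t` and the mean
is at most `M √(t log t)` in absolute value, the Gaussian mass of `[0, t^{1/3}]`
is at most `K t^{-1/15} e^{(log t)^{2/3}}` times the mass of `[t^{1/3}, t^{2/5}]`. -/
theorem gaussian_initial_segment_comparison
    (c₁ C₁ M : ℝ) (hc : 0 < c₁) (hcC : c₁ ≤ C₁) (hM : 0 < M) :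
    ∃ K t₀ : ℝ, 0 < K ∧ 3 ≤ t₀ ∧
      ∀ t : ℝ, t₀ ≤ t → ∀ σ2 : ℝ, σ2 ∈ Set.Icc (c₁ * t) (C₁ * t) →
      ∀ μ : ℝ, |μ| ≤ M * Real.sqrt (t * Real.log t) →
        (∫ z in (0 : ℝ)..(t ^ ((1 : ℝ) / 3)), gaussDensity μ σ2 z) ≤
          K * t ^ (-(1 : ℝ) / 15) * Real.exp ((Real.log t) ^ ((2 : ℝ) / 3)) *
            ∫ z in (t ^ ((1 : ℝ) / 3))..(t ^ ((2 : ℝ) / 5)), gaussDensity μ σ2 z :=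
  gaussian_initial_segment_comparison_general c₁ C₁ M hc
end

section
/- Let C ≥ 0 and m ≥ 1, let X_1,…,X_m be independent real-valued random variables with X_j ≥ −C almost surely for every j, and set S_0 = 0 and S_l = X_1 + … + X_l. Let D, z ∈ ℝ with z ≥ D, and let J ⊆ ℝ be a Borel set. Then P( (∀ l ≤ m: z + S_l ≥ D) and z + S_m ∈ J ) ≥ P( z + S_m ∈ J ) − max_{1 ≤ l ≤ m} sup_{d ∈ [D−C, D]} P( d + (S_m − S_l) ∈ J ). -/
/-!
If the walk `z + S` ends in `J` without staying above `D`, let `l ≥ 1` be the first time it drops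
below `D`; as the increments are at least `-C`, it then sits at some `d ∈ [D - C, D)`. The event
"first breach at `l`" and the position `d` are functions of `X 0, …, X (l - 1)`, hence independent
of `S m - S l`. Integrating over the past, the probability of a first breach at `l` followed by
landing in `J` is at most the probability of the breach times the worst case over `d`; the breach
events are disjoint, so these probabilities add up to at most one.
-/

open MeasureTheory ProbabilityTheory

namespace ProbabilityTheory

variable {Ω ι α β : Type*} {mΩ : MeasurableSpace Ω} {μ : Measure Ω}
  {κ : ι → Type*} {m : ∀ i, MeasurableSpace (κ i)} {f : ∀ i, Ω → κ i}

lemma measurable_biSup_comap_of_mem {S : Set ι} {i : ι} (hi : i ∈ S) :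
    Measurable[⨆ j ∈ S, (m j).comap (f j)] (f i) :=
  (comap_measurable (f i)).mono (le_iSup₂ (f := fun j (_ : j ∈ S) => (m j).comap (f j)) i hi)
    le_rfl

lemma iIndepFun.indepFun_of_measurable_biSup [MeasurableSpace α] [MeasurableSpace β]
    (hf : iIndepFun f μ) (hmeas : ∀ i, Measurable (f i)) {S T : Set ι} (hST : Disjoint S T)
    {U : Ω → α} {V : Ω → β} (hU : Measurable[⨆ i ∈ S, (m i).comap (f i)] U)
    (hV : Measurable[⨆ i ∈ T, (m i).comap (f i)] V) :
    IndepFun U V μ :=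
  (IndepFun_iff_Indep U V μ).2 <| indep_of_indep_of_le
    (indep_iSup_of_disjoint (fun i => (hmeas i).comap_le) hf hST) hU.comap_le hV.comap_le

lemma IndepFun.measure_inter_le_mul_iSup [IsFiniteMeasure μ] [MeasurableSpace α]
    [MeasurableSpace β] {U : Ω → α} {V : Ω → β} (hUV : IndepFun U V μ) (hU : Measurable U)
    (hV : Measurable V) {G : Set α} (hG : MeasurableSet G) {K : Set (α × β)}
    (hK : MeasurableSet K) :
    μ (U ⁻¹' G ∩ {ω | (U ω, V ω) ∈ K}) ≤ μ (U ⁻¹' G) * ⨆ u ∈ G, μ {ω | (u, V ω) ∈ K} := by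
  set c := ⨆ u ∈ G, μ {ω | (u, V ω) ∈ K}
  have hGK : MeasurableSet (G ×ˢ Set.univ ∩ K) := (hG.prod .univ).inter hK
  have hsection :
      ∀ u, μ.map V (Prod.mk u ⁻¹' (G ×ˢ Set.univ ∩ K)) ≤ G.indicator (fun _ => c) u := by
    intro u
    by_cases hu : u ∈ G
    · rw [Set.indicator_of_mem hu, Measure.map_apply hV (measurable_prodMk_left hGK)]
      exact le_iSup₂_of_le (f := fun u (_ : u ∈ G) => μ {ω | (u, V ω) ∈ K}) u hu
        (measure_mono fun ω hω => hω.2)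
    · simp [hu]
  calc μ (U ⁻¹' G ∩ {ω | (U ω, V ω) ∈ K})
        = μ.map (fun ω => (U ω, V ω)) (G ×ˢ Set.univ ∩ K) := by
        rw [Measure.map_apply (hU.prodMk hV) hGK]
        congr 1
        ext ω
        simp
    _ = ∫⁻ u, μ.map V (Prod.mk u ⁻¹' (G ×ˢ Set.univ ∩ K)) ∂μ.map U := by
        rw [(indepFun_iff_map_prod_eq_prod_map_map hU.aemeasurable hV.aemeasurable).1 hUV,
          Measure.prod_apply hGK]
    _ ≤ ∫⁻ u, G.indicator (fun _ => c) u ∂μ.map U := lintegral_mono hsection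
    _ = μ (U ⁻¹' G) * c := by
        rw [lintegral_indicator_const hG, Measure.map_apply hU hG, mul_comm]

end ProbabilityTheory

def FirstBreachAt (D C : ℝ) (w : ℕ → ℝ) (l : ℕ) : Prop :=
  (∀ k < l, D ≤ w k) ∧ w l ∈ Set.Ico (D - C) D

namespace FirstBreachAt

variable {D C : ℝ} {w : ℕ → ℝ}

lemma unique {a b : ℕ} (ha : FirstBreachAt D C w a) (hb : FirstBreachAt D C w b) : a = b := by
  by_contra hne
  rcases lt_or_gt_of_ne hne with h | h
  · exact (hb.1 a h).not_gt ha.2.2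
  · exact (ha.1 b h).not_gt hb.2.2

lemma exists_of_exists_lt {m : ℕ} (hw0 : D ≤ w 0) (hstep : ∀ k < m, w k - C ≤ w (k + 1))
    (hbreach : ∃ l ≤ m, w l < D) : ∃ l ∈ Finset.Icc 1 m, FirstBreachAt D C w l := by
  obtain ⟨hlm, hl⟩ := Nat.find_spec hbreach
  have hbefore : ∀ k < Nat.find hbreach, D ≤ w k := fun k hk =>
    not_lt.1 fun h => Nat.find_min hbreach hk ⟨by omega, h⟩
  obtain ⟨k, hk⟩ : ∃ k, Nat.find hbreach = k + 1 :=
    Nat.exists_eq_succ_of_ne_zero fun h => (h ▸ hl).not_ge hw0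
  rw [hk] at hlm hl hbefore
  refine ⟨k + 1, Finset.mem_Icc.2 ⟨by omega, hlm⟩, hbefore, ?_, hl⟩
  linarith [hstep k (by omega), hbefore k (by omega)]

lemma measurableSet_setOf (D C : ℝ) (l : ℕ) :
    MeasurableSet {w : ℕ → ℝ | FirstBreachAt D C w l} := by
  simp only [FirstBreachAt, Set.ofPred_and, Set.ofPred_forall]
  exact (MeasurableSet.iInter fun k => MeasurableSet.iInter fun _ =>
    measurableSet_le measurable_const (measurable_pi_apply k)).inter
    (measurableSet_Ico.preimage (measurable_pi_apply l))

end FirstBreachAt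

open Finset

section RandomWalk

variable {Ω : Type*} [MeasurableSpace Ω] {μ : Measure Ω} {m l : ℕ} {X : ℕ → Ω → ℝ}

def walk (z : ℝ) (X : ℕ → Ω → ℝ) (ω : Ω) (k : ℕ) : ℝ := z + ∑ j ∈ range k, X j ω

lemma measurable_walk (hX : ∀ j, Measurable (X j)) (z : ℝ) : Measurable (walk z X) :=
  measurable_pi_lambda _ fun _ => measurable_const.add (Finset.measurable_sum _ fun j _ => hX j)

lemma measurableSet_firstBreachAt (hX : ∀ j, Measurable (X j)) (D C z : ℝ) (l : ℕ) :
    MeasurableSet {ω | FirstBreachAt D C (walk z X ω) l} :=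
  measurable_walk hX z (FirstBreachAt.measurableSet_setOf D C l)

lemma indepFun_stoppedWalk_sum_Ico (hX : ∀ j, Measurable (X j))
    (hindep : iIndepFun (fun j : Fin m => X j) μ) (hlm : l ≤ m) (z : ℝ) :
    IndepFun (fun ω k => walk z X ω (min k l)) (fun ω => ∑ j ∈ Ico l m, X j ω) μ := by
  refine hindep.indepFun_of_measurable_biSup (fun i => hX i) (S := {i | (i : ℕ) < l})
    (T := {i | l ≤ (i : ℕ)})
    (Set.disjoint_left.2 fun i (hi : (i : ℕ) < l) hi' => hi'.not_gt hi) ?_ ?_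
  · refine @measurable_pi_lambda _ _ _ (_) _ _ fun k =>
      Measurable.const_add (Finset.measurable_sum (m := _) _ fun j hj => ?_) z
    have hjl : j < l := by simp only [mem_range] at hj; omega
    exact measurable_biSup_comap_of_mem (f := fun i : Fin m => X i) (i := ⟨j, by omega⟩) hjl
  · exact Finset.measurable_sum (m := _) _ fun j hj =>
      measurable_biSup_comap_of_mem (f := fun i : Fin m => X i) (i := ⟨j, (mem_Ico.1 hj).2⟩)
        (mem_Ico.1 hj).1

lemma measure_firstBreachAt_inter_le [IsFiniteMeasure μ] (hX : ∀ j, Measurable (X j))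
    (hindep : iIndepFun (fun j : Fin m => X j) μ) (hlm : l ≤ m) (D C z : ℝ) {J : Set ℝ}
    (hJ : MeasurableSet J) :
    μ ({ω | FirstBreachAt D C (walk z X ω) l} ∩ {ω | walk z X ω m ∈ J})
      ≤ μ {ω | FirstBreachAt D C (walk z X ω) l} * ⨆ d ∈ Set.Icc (D - C) D,
          μ {ω | d + ((∑ j ∈ range m, X j ω) - ∑ j ∈ range l, X j ω) ∈ J} := by
  -- The walk stopped at time `l` carries both the breach event and the breach position.
  set U : Ω → ℕ → ℝ := fun ω k => walk z X ω (min k l)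
  set V : Ω → ℝ := fun ω => ∑ j ∈ Ico l m, X j ω
  set G : Set (ℕ → ℝ) := {w | FirstBreachAt D C w l}
  set K : Set ((ℕ → ℝ) × ℝ) := {p | p.1 l + p.2 ∈ J}
  have hU : Measurable U :=
    measurable_pi_lambda _ fun k => (measurable_pi_apply _).comp (measurable_walk hX z)
  have hK : MeasurableSet K :=
    hJ.preimage (((measurable_pi_apply l).comp measurable_fst).add measurable_snd)
  have hbreach : U ⁻¹' G = {ω | FirstBreachAt D C (walk z X ω) l} := by
    ext ω
    simp only [U, G, Set.mem_preimage, Set.mem_ofPred_eq, FirstBreachAt, min_self]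
    exact and_congr_left' (forall₂_congr fun k hk => by rw [min_eq_left hk.le])
  have hend : {ω | (U ω, V ω) ∈ K} = {ω | walk z X ω m ∈ J} := by
    simp only [U, V, K, Set.mem_ofPred_eq, min_self, walk, add_assoc,
      sum_range_add_sum_Ico _ hlm]
  have hsup : ⨆ u ∈ G, μ {ω | (u, V ω) ∈ K} ≤ ⨆ d ∈ Set.Icc (D - C) D,
      μ {ω | d + ((∑ j ∈ range m, X j ω) - ∑ j ∈ range l, X j ω) ∈ J} := by
    refine iSup₂_le fun u hu => le_iSup₂_of_le (f := fun d (_ : d ∈ Set.Icc (D - C) D) =>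
      μ {ω | d + ((∑ j ∈ range m, X j ω) - ∑ j ∈ range l, X j ω) ∈ J})
      (u l) (Set.Ico_subset_Icc_self hu.2) ?_
    simp only [K, V, Set.mem_ofPred_eq, sum_Ico_eq_sub _ hlm, le_refl]
  rw [← hbreach, ← hend]
  exact ((indepFun_stoppedWalk_sum_Ico hX hindep hlm z).measure_inter_le_mul_iSup hU
    (Finset.measurable_sum _ fun j _ => hX j) (FirstBreachAt.measurableSet_setOf D C l) hK).trans
    (mul_le_mul_right hsup _)

lemma sum_measure_firstBreachAt_le_one [IsProbabilityMeasure μ] (hX : ∀ j, Measurable (X j))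
    (D C z : ℝ) (s : Finset ℕ) : ∑ l ∈ s, μ {ω | FirstBreachAt D C (walk z X ω) l} ≤ 1 :=
  (sum_measure_le_measure_univ
    (fun l _ => (measurableSet_firstBreachAt hX D C z l).nullMeasurableSet)
    fun _ _ _ _ hab => (Set.disjoint_left.2 fun _ ha hb => hab (ha.unique hb)).aedisjoint).trans_eq
    measure_univ

lemma ae_forall_le_or_exists_firstBreachAt {C D z : ℝ}
    (hbound : ∀ j < m, ∀ᵐ ω ∂μ, -C ≤ X j ω) (hz : D ≤ z) :
    ∀ᵐ ω ∂μ, (∀ l ≤ m, D ≤ walk z X ω l) ∨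
      ∃ l ∈ Icc 1 m, FirstBreachAt D C (walk z X ω) l := by
  have hbound' : ∀ᵐ ω ∂μ, ∀ j < m, -C ≤ X j ω :=
    ae_all_iff.2 fun j => Filter.eventually_imp_distrib_left.2 (hbound j)
  filter_upwards [hbound'] with ω hω
  refine or_iff_not_imp_left.2 fun hbreach =>
    FirstBreachAt.exists_of_exists_lt ?_ (fun k hk => ?_) (by simpa using hbreach)
  · simpa [walk] using hz
  · simp only [walk, sum_range_succ]
    linarith [hω k hk]

end RandomWalk

theorem wall_removal_reflection_general
    {Ω : Type*} [MeasurableSpace Ω] (μ : Measure Ω) [IsProbabilityMeasure μ]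
    (C : ℝ) (m : ℕ) (X : ℕ → Ω → ℝ)
    (hmeas : ∀ j, Measurable (X j))
    (hindep : iIndepFun (fun j : Fin m => X j) μ)
    (hbound : ∀ j < m, ∀ᵐ ω ∂μ, -C ≤ X j ω)
    (D z : ℝ) (hz : D ≤ z) (J : Set ℝ) (hJ : MeasurableSet J) :
    μ {ω | (∀ l ≤ m, D ≤ z + ∑ j ∈ Finset.range l, X j ω) ∧
        z + (∑ j ∈ Finset.range m, X j ω) ∈ J}
      ≥ μ {ω | z + (∑ j ∈ Finset.range m, X j ω) ∈ J}
        - ⨆ l ∈ Finset.Icc 1 m, ⨆ d ∈ Set.Icc (D - C) D,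
            μ {ω | d + ((∑ j ∈ Finset.range m, X j ω)
                - ∑ j ∈ Finset.range l, X j ω) ∈ J} := by
  set M := ⨆ l ∈ Finset.Icc 1 m, ⨆ d ∈ Set.Icc (D - C) D,
    μ {ω | d + ((∑ j ∈ Finset.range m, X j ω) - ∑ j ∈ Finset.range l, X j ω) ∈ J}
  set A : Set Ω := {ω | (∀ l ≤ m, D ≤ walk z X ω l) ∧ walk z X ω m ∈ J}
  set B : Set Ω := {ω | walk z X ω m ∈ J}
  set F : ℕ → Set Ω := fun l => {ω | FirstBreachAt D C (walk z X ω) l}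
  have hcover : B ≤ᵐ[μ] (A ∪ ⋃ l ∈ Icc 1 m, F l ∩ B : Set Ω) := by
    filter_upwards [ae_forall_le_or_exists_firstBreachAt hbound hz] with ω hω hB
    rcases hω with hstay | ⟨l, hl, hbreach⟩
    · exact Or.inl ⟨hstay, hB⟩
    · exact Or.inr (Set.mem_biUnion hl ⟨hbreach, hB⟩)
  refine tsub_le_iff_right.2 ?_
  calc μ B ≤ μ A + ∑ l ∈ Icc 1 m, μ (F l ∩ B) :=
        (measure_mono_ae hcover).trans <| (measure_union_le _ _).trans <| by
          gcongr; exact measure_biUnion_finset_le _ _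
    _ ≤ μ A + ∑ l ∈ Icc 1 m, μ (F l) * M := by
        gcongr with l hl
        exact (measure_firstBreachAt_inter_le hmeas hindep (mem_Icc.1 hl).2 D C z hJ).trans
          (by gcongr; exact le_iSup₂_of_le l hl le_rfl)
    _ ≤ μ A + M := by
        rw [← sum_mul]
        gcongr
        exact mul_le_of_le_one_left' (sum_measure_firstBreachAt_le_one hmeas D C z _)

/-- Reflection-type barrier removal inequality: for a walk with independent
increments bounded below by `-C`, starting at `z ≥ D`, the probability of staying
above level `D` and ending in `J` is at least the probability of ending in `J`
minus the worst-case probability, over the first breach time `l ∈ {1,…,m}` and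
breach positions `d ∈ [D - C, D]`, that the remaining increments carry the walk
from `d` into `J`. -/
theorem wall_removal_reflection
    {Ω : Type*} [MeasurableSpace Ω] (μ : Measure Ω) [IsProbabilityMeasure μ]
    (C : ℝ) (hC : 0 ≤ C) (m : ℕ) (hm : 1 ≤ m) (X : ℕ → Ω → ℝ)
    (hmeas : ∀ j, Measurable (X j))
    (hindep : iIndepFun (fun j : Fin m => X j) μ)
    (hbound : ∀ j < m, ∀ᵐ ω ∂μ, -C ≤ X j ω)
    (D z : ℝ) (hz : D ≤ z) (J : Set ℝ) (hJ : MeasurableSet J) :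
    μ {ω | (∀ l ≤ m, D ≤ z + ∑ j ∈ Finset.range l, X j ω) ∧
        z + (∑ j ∈ Finset.range m, X j ω) ∈ J}
      ≥ μ {ω | z + (∑ j ∈ Finset.range m, X j ω) ∈ J}
        - ⨆ l ∈ Finset.Icc 1 m, ⨆ d ∈ Set.Icc (D - C) D,
            μ {ω | d + ((∑ j ∈ Finset.range m, X j ω)
                - ∑ j ∈ Finset.range l, X j ω) ∈ J} :=
  wall_removal_reflection_general μ C m X hmeas hindep hbound D z hz J hJ
end

section
/- For all constants C > 0 and c > 0 one has sup_{n ≥ 3} Σ_{k=1}^{⌊n − (log n)^7⌋} n^{C·k/n} · exp( −c·( (min(k+1, n−k+1))^{1/6} − 1 ) ) < ∞. -/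
/-!
Write `L = log n` and `m = min (k + 1, n - k + 1)`. On the first half `2k ≤ n` the tilt exponent is
`C L k / n ≤ C L (k / n) ^ (1/6)`, which is at most `(c/2) k ^ (1/6)` as soon as `C L ≤ (c/2) n ^ (1/6)`;
so these terms are dominated by the summable sequence `e ^ c exp (-(c/2) k ^ (1/6))`.
On the second half `m ≥ L ^ 7`, so each term is at most `exp (C L + c - c L ^ (7/6)) ≤ e ^ c / n`
once `(C + 1) L ≤ c L ^ (7/6)`, and there are at most `n` of them.
Both conditions hold for all large `n`, and finitely many `n` do not matter.
-/

open Real Filter Finset Asymptotics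

lemma summable_exp_neg_mul_rpow {a p : ℝ} (ha : 0 < a) (hp : 0 < p) :
    Summable fun k : ℕ => exp (-a * (k : ℝ) ^ p) := by
  refine summable_of_isBigO_nat (g := fun k : ℕ => (k : ℝ) ^ (-2 : ℝ))
    (summable_nat_rpow.mpr (by norm_num)) ?_
  have hlittle := (isLittleO_exp_neg_mul_rpow_atTop ha (-2 / p)).comp_tendsto
    ((tendsto_rpow_atTop hp).comp tendsto_natCast_atTop_atTop)
  refine hlittle.isBigO.congr_right fun k => ?_
  simp only [Function.comp_apply]
  rw [← rpow_mul (Nat.cast_nonneg k), mul_div_cancel₀ _ hp.ne']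

lemma eventually_mul_log_le_mul_rpow (a : ℝ) {b r : ℝ} (hb : 0 < b) (hr : 0 < r) :
    ∀ᶠ x : ℝ in atTop, a * log x ≤ b * x ^ r := by
  filter_upwards [((isLittleO_log_rpow_atTop hr).const_mul_left a).def hb,
    eventually_ge_atTop 0] with x hx hx0
  rw [norm_of_nonneg (rpow_nonneg hx0 r)] at hx
  exact (le_abs_self _).trans hx

lemma eventually_mul_le_mul_rpow (a : ℝ) {b q : ℝ} (hb : 0 < b) (hq : 1 < q) :
    ∀ᶠ x : ℝ in atTop, a * x ≤ b * x ^ q := by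
  filter_upwards [(tendsto_rpow_atTop (sub_pos.mpr hq)).eventually_ge_atTop (a / b),
    eventually_ge_atTop 0] with x hx hx0
  have hsplit : x ^ q = x * x ^ (q - 1) := by
    rw [← rpow_one_add' hx0 (by linarith), add_sub_cancel]
  rw [div_le_iff₀ hb] at hx
  rw [hsplit]
  nlinarith

lemma mul_div_le_mul_rpow {A b x y p : ℝ} (hA : 0 ≤ A) (hx : 0 ≤ x) (hxy : x ≤ y) (hy : 0 < y)
    (hp : p ≤ 1) (hAy : A ≤ b * y ^ p) : A * (x / y) ≤ b * x ^ p := by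
  have hratio : x / y ≤ x ^ p / y ^ p := by
    rw [← div_rpow hx hy.le]
    exact self_le_rpow_of_le_one (div_nonneg hx hy.le) (div_le_one_of_le₀ hxy hy.le) hp
  calc A * (x / y) ≤ b * y ^ p * (x ^ p / y ^ p) :=
        mul_le_mul hAy hratio (div_nonneg hx hy.le) (hA.trans hAy)
    _ = b * x ^ p := by field_simp [(rpow_pos_of_pos hy p).ne']

noncomputable def tiltedBananaWeight (C c : ℝ) (n k : ℕ) : ℝ :=
  (n : ℝ) ^ (C * (k : ℝ) / (n : ℝ)) *
    exp (-c * ((min ((k : ℝ) + 1) ((n : ℝ) - (k : ℝ) + 1)) ^ ((1 : ℝ) / 6) - 1))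

section

variable {C c : ℝ} {n k : ℕ}

lemma tiltedBananaWeight_le_of_two_mul_le (hC : 0 ≤ C) (hc : 0 ≤ c) (hn : 0 < n)
    (hk : 2 * k ≤ n) (hlog : C * log n ≤ c / 2 * (n : ℝ) ^ ((1 : ℝ) / 6)) :
    tiltedBananaWeight C c n k ≤ exp c * exp (-(c / 2) * (k : ℝ) ^ ((1 : ℝ) / 6)) := by
  have hn' : (0 : ℝ) < n := by exact_mod_cast hn
  have hk' : (2 : ℝ) * k ≤ n := by exact_mod_cast hk
  have hmin : min ((k : ℝ) + 1) ((n : ℝ) - k + 1) = k + 1 := min_eq_left (by linarith)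
  have htilt : log n * (C * k / n) ≤ c / 2 * (k : ℝ) ^ ((1 : ℝ) / 6) :=
    calc log n * (C * k / n) = C * log n * (k / n) := by ring
      _ ≤ c / 2 * (k : ℝ) ^ ((1 : ℝ) / 6) :=
        mul_div_le_mul_rpow (mul_nonneg hC (log_natCast_nonneg n)) (Nat.cast_nonneg k)
          (by linarith) hn' (by norm_num) hlog
  have hbanana : (k : ℝ) ^ ((1 : ℝ) / 6) ≤ ((k : ℝ) + 1) ^ ((1 : ℝ) / 6) :=
    rpow_le_rpow (Nat.cast_nonneg k) (by linarith) (by norm_num)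
  rw [tiltedBananaWeight, hmin, rpow_def_of_pos hn', ← exp_add, ← exp_add, exp_le_exp]
  nlinarith

lemma tiltedBananaWeight_le_of_le_two_mul (hC : 0 ≤ C) (hc : 0 ≤ c) (hn : 0 < n)
    (hk : n ≤ 2 * k) (hkL : (k : ℝ) ≤ n - log n ^ 7)
    (hlog : (C + 1) * log n ≤ c * log n ^ ((7 : ℝ) / 6)) :
    tiltedBananaWeight C c n k ≤ exp c / n := by
  have hn' : (0 : ℝ) < n := by exact_mod_cast hn
  have hk' : (n : ℝ) ≤ 2 * k := by exact_mod_cast hk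
  have hL : 0 ≤ log n := log_natCast_nonneg n
  have hmin : min ((k : ℝ) + 1) ((n : ℝ) - k + 1) = n - k + 1 := min_eq_right (by linarith)
  have hbanana : log n ^ ((7 : ℝ) / 6) ≤ ((n : ℝ) - k + 1) ^ ((1 : ℝ) / 6) := by
    rw [show (7 : ℝ) / 6 = (7 : ℕ) * (1 / 6) by norm_num, rpow_natCast_mul hL]
    exact rpow_le_rpow (by positivity) (by linarith) (by norm_num)
  have htilt : log n * (C * k / n) ≤ log n * C := by
    refine mul_le_mul_of_nonneg_left ?_ hL
    rw [div_le_iff₀ hn']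
    exact mul_le_mul_of_nonneg_left (by linarith [pow_nonneg hL 7]) hC
  calc tiltedBananaWeight C c n k
      = exp (log n * (C * k / n) + -c * (((n : ℝ) - k + 1) ^ ((1 : ℝ) / 6) - 1)) := by
        rw [tiltedBananaWeight, hmin, rpow_def_of_pos hn', exp_add]
    _ ≤ exp (c - log n) := exp_le_exp.2 (by nlinarith)
    _ = exp c / n := by rw [exp_sub, exp_log hn']

lemma tiltedBananaWeight_le (hC : 0 ≤ C) (hc : 0 ≤ c) (hn : 0 < n)
    (hkL : (k : ℝ) ≤ n - log n ^ 7)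
    (hlog₁ : C * log n ≤ c / 2 * (n : ℝ) ^ ((1 : ℝ) / 6))
    (hlog₂ : (C + 1) * log n ≤ c * log n ^ ((7 : ℝ) / 6)) :
    tiltedBananaWeight C c n k ≤ exp c * exp (-(c / 2) * (k : ℝ) ^ ((1 : ℝ) / 6)) + exp c / n := by
  rcases le_total (2 * k) n with hk | hk
  · exact (tiltedBananaWeight_le_of_two_mul_le hC hc hn hk hlog₁).trans
      (le_add_of_nonneg_right (by positivity))
  · exact (tiltedBananaWeight_le_of_le_two_mul hC hc hn hk hkL hlog₂).trans
      (le_add_of_nonneg_left (by positivity))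

lemma sum_tiltedBananaWeight_le (hC : 0 ≤ C) (hc : 0 < c) (hn : 0 < n)
    (hlog₁ : C * log n ≤ c / 2 * (n : ℝ) ^ ((1 : ℝ) / 6))
    (hlog₂ : (C + 1) * log n ≤ c * log n ^ ((7 : ℝ) / 6)) :
    ∑ k ∈ Icc 1 ⌊(n : ℝ) - log n ^ 7⌋₊, tiltedBananaWeight C c n k ≤
      exp c * ∑' k : ℕ, exp (-(c / 2) * (k : ℝ) ^ ((1 : ℝ) / 6)) + exp c := by
  set K := ⌊(n : ℝ) - log n ^ 7⌋₊
  have hKn : (K : ℝ) ≤ n := by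
    exact_mod_cast Nat.floor_le_of_le (by linarith [pow_nonneg (log_natCast_nonneg n) 7])
  have hbulk : ∑ k ∈ Icc 1 K, exp (-(c / 2) * (k : ℝ) ^ ((1 : ℝ) / 6)) ≤
      ∑' k : ℕ, exp (-(c / 2) * (k : ℝ) ^ ((1 : ℝ) / 6)) :=
    (summable_exp_neg_mul_rpow (half_pos hc) (by norm_num)).sum_le_tsum _
      fun _ _ => (exp_pos _).le
  have htail : (K : ℝ) * (exp c / n) ≤ exp c := by
    rw [mul_div_assoc', div_le_iff₀ (by exact_mod_cast hn), mul_comm]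
    exact mul_le_mul_of_nonneg_left hKn (exp_pos c).le
  calc ∑ k ∈ Icc 1 K, tiltedBananaWeight C c n k
      ≤ ∑ k ∈ Icc 1 K, (exp c * exp (-(c / 2) * (k : ℝ) ^ ((1 : ℝ) / 6)) + exp c / n) :=
        sum_le_sum fun k hk => by
          obtain ⟨hk₁, hkK⟩ := mem_Icc.mp hk
          exact tiltedBananaWeight_le hC hc.le hn ((Nat.le_floor_iff' (by omega)).mp hkK)
            hlog₁ hlog₂
    _ = exp c * ∑ k ∈ Icc 1 K, exp (-(c / 2) * (k : ℝ) ^ ((1 : ℝ) / 6)) + K * (exp c / n) := by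
        rw [sum_add_distrib, ← mul_sum, sum_const, Nat.card_Icc, nsmul_eq_mul, Nat.add_sub_cancel]
    _ ≤ _ := by gcongr

end

/-- The key analytic estimate of Lemma `taueasy`: the sums
`Σ_{k=1}^{⌊n - (log n)^7⌋} n^{C k / n} exp(-c ((min(k+1, n-k+1))^{1/6} - 1))`
are bounded uniformly in `n ≥ 3`. -/
theorem taueasy_sum_bounded (C c : ℝ) (hC : 0 < C) (hc : 0 < c) :
    ∃ B : ℝ, ∀ n : ℕ, 3 ≤ n →
      (∑ k ∈ Finset.Icc 1 ⌊(n : ℝ) - Real.log n ^ 7⌋₊,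
          (n : ℝ) ^ (C * (k : ℝ) / (n : ℝ)) *
            Real.exp (-c *
              ((min ((k : ℝ) + 1) ((n : ℝ) - (k : ℝ) + 1)) ^ ((1 : ℝ) / 6) - 1)))
        ≤ B := by
  have hlarge : ∀ᶠ n : ℕ in atTop, ∑ k ∈ Icc 1 ⌊(n : ℝ) - log n ^ 7⌋₊,
      tiltedBananaWeight C c n k ≤
        exp c * ∑' k : ℕ, exp (-(c / 2) * (k : ℝ) ^ ((1 : ℝ) / 6)) + exp c := by
    filter_upwards [eventually_gt_atTop 0,
      tendsto_natCast_atTop_atTop.eventually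
        (eventually_mul_log_le_mul_rpow C (half_pos hc) (by norm_num : (0 : ℝ) < 1 / 6)),
      (tendsto_log_atTop.comp tendsto_natCast_atTop_atTop).eventually
        (eventually_mul_le_mul_rpow (C + 1) hc (by norm_num : (1 : ℝ) < 7 / 6))]
      with n hn hlog₁ hlog₂
    exact sum_tiltedBananaWeight_le hC.le hc hn hlog₁ hlog₂
  obtain ⟨B, hB⟩ := (isBoundedUnder_of_eventually_le hlarge).bddAbove_range
  exact ⟨B, fun n _ => hB ⟨n, rfl⟩⟩
end

section
/- For all constants γ > 0 and c > 0 one has sup_{n ≥ 3} Σ_{k=⌈(log n)^7⌉}^{n} n^{γ·(n−k)/n} · exp( −c·( (min(k+1, n−k+1))^{1/6} − 1 ) ) < ∞. -/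
/-!
Write `a = min (k + 1) (n - k + 1)` for the distance of `k` to the nearer end of `[0, n]`. The
tilt `log n · (n - k) / n` is at most `7 a^{1/7}`: near `0` because `k ≥ (log n)^7`, near `n`
because `log n ≤ 7 n^{1/7}`. As `a^{1/7} = o(a^{1/6})`, each summand is then `O(a⁻²)`, hence
`O((k + 1)⁻² + (n - k + 1)⁻²)`, and `∑ₖ ((k + 1)⁻² + (n - k + 1)⁻²) ≤ 2 ∑ⱼ j⁻² ≤ 4`.
-/

open Real Finset

lemma log_mul_div_le_rpow_div {x m ε : ℝ} (hx : 0 < x) (hm : 0 ≤ m) (hmx : m ≤ x)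
    (hε : 0 < ε) (hε1 : ε ≤ 1) : log x * (m / x) ≤ m ^ ε / ε := by
  have hq : 0 ≤ m / x := div_nonneg hm hx.le
  calc log x * (m / x) ≤ x ^ ε / ε * (m / x) :=
        mul_le_mul_of_nonneg_right (log_le_rpow_div hx.le hε) hq
    _ ≤ x ^ ε / ε * (m / x) ^ ε :=
        mul_le_mul_of_nonneg_left (self_le_rpow_of_le_one hq ((div_le_one hx).2 hmx) hε1)
          (by positivity)
    _ = m ^ ε / ε := by
        rw [div_rpow hm hx.le]; field_simp [(rpow_pos_of_pos hx ε).ne']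

lemma le_rpow_one_div_of_ceil_pow_le {x : ℝ} (hx : 0 ≤ x) {p k : ℕ} (hp : p ≠ 0)
    (hk : ⌈x ^ p⌉₊ ≤ k) : x ≤ (k : ℝ) ^ ((1 : ℝ) / p) := by
  have h : x ^ p ≤ k := (Nat.le_ceil _).trans (by exact_mod_cast hk)
  calc x = (x ^ p) ^ ((1 : ℝ) / p) := by
        rw [← rpow_natCast, ← rpow_mul hx, mul_one_div_cancel (by exact_mod_cast hp), rpow_one]
    _ ≤ (k : ℝ) ^ ((1 : ℝ) / p) := by gcongr

lemma log_mul_sub_div_le_min_rpow {n k : ℕ} (hn : 0 < n) (hkn : k ≤ n)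
    (hk : ⌈log n ^ 7⌉₊ ≤ k) :
    log n * (((n : ℝ) - k) / n) ≤
      7 * min ((k : ℝ) + 1) ((n : ℝ) - k + 1) ^ ((1 : ℝ) / 7) := by
  have hlog : 0 ≤ log n := log_natCast_nonneg n
  have hkn' : (k : ℝ) ≤ n := by exact_mod_cast hkn
  rcases min_cases ((k : ℝ) + 1) ((n : ℝ) - k + 1) with ⟨h, -⟩ | ⟨h, -⟩ <;> rw [h]
  · calc log n * (((n : ℝ) - k) / n) ≤ log n * 1 := by
          gcongr; exact div_le_one_of_le₀ (by linarith [k.cast_nonneg (α := ℝ)]) n.cast_nonneg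
      _ ≤ (k : ℝ) ^ ((1 : ℝ) / 7) := by
          rw [mul_one]; exact_mod_cast le_rpow_one_div_of_ceil_pow_le hlog (by norm_num) hk
      _ ≤ 7 * ((k : ℝ) + 1) ^ ((1 : ℝ) / 7) := by
          have : (k : ℝ) ^ ((1 : ℝ) / 7) ≤ ((k : ℝ) + 1) ^ ((1 : ℝ) / 7) := by
            gcongr; linarith
          linarith [rpow_nonneg (k.cast_nonneg (α := ℝ)) ((1 : ℝ) / 7)]
  · calc log n * (((n : ℝ) - k) / n) ≤ ((n : ℝ) - k) ^ ((1 : ℝ) / 7) / (1 / 7) :=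
          log_mul_div_le_rpow_div (by exact_mod_cast hn) (by linarith)
            (by linarith [k.cast_nonneg (α := ℝ)]) (by norm_num) (by norm_num)
      _ = 7 * ((n : ℝ) - k) ^ ((1 : ℝ) / 7) := by ring
      _ ≤ 7 * ((n : ℝ) - k + 1) ^ ((1 : ℝ) / 7) := by gcongr; linarith

lemma exists_mul_pow_le_mul_pow_succ_add (A : ℝ) {ε : ℝ} (hε : 0 < ε) (d : ℕ) :
    ∃ C, ∀ s : ℝ, 0 ≤ s → A * s ^ d ≤ ε * s ^ (d + 1) + C := by
  set R := |A| / ε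
  refine ⟨|A| * R ^ d, fun s hs => ?_⟩
  have hA : A * s ^ d ≤ |A| * s ^ d := mul_le_mul_of_nonneg_right (le_abs_self A) (by positivity)
  have hε' : 0 ≤ ε * s ^ (d + 1) := by positivity
  rcases le_total s R with h | h
  · have := mul_le_mul_of_nonneg_left (pow_le_pow_left₀ hs h d) (abs_nonneg A)
    linarith
  · have h' : |A| ≤ ε * s := by rwa [div_le_iff₀' hε] at h
    have := mul_le_mul_of_nonneg_right h' (pow_nonneg hs d)
    have : 0 ≤ |A| * R ^ d := by positivity
    rw [pow_succ']
    linarith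

lemma pow_mul_exp_neg_mul_le {c y : ℝ} (hc : 0 < c) (hy : 0 ≤ y) (d : ℕ) :
    y ^ d * exp (-(c * y)) ≤ d.factorial / c ^ d := by
  have h := Real.pow_div_factorial_le_exp _ (mul_nonneg hc.le hy) d
  rw [exp_neg, ← div_eq_mul_inv, div_le_div_iff₀ (exp_pos _) (by positivity)]
  rw [div_le_iff₀ (by positivity), mul_pow] at h
  linarith

lemma exists_exp_rpow_sub_rpow_le (A : ℝ) {c : ℝ} (hc : 0 < c) :
    ∃ K, 0 ≤ K ∧ ∀ a : ℝ, 0 < a →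
      exp (A * a ^ ((1 : ℝ) / 7) - c * a ^ ((1 : ℝ) / 6)) ≤ K / a ^ 2 := by
  obtain ⟨C, hC⟩ := exists_mul_pow_le_mul_pow_succ_add A (half_pos hc) 6
  refine ⟨exp C * (Nat.factorial 12 / (c / 2) ^ 12), by positivity, fun a ha => ?_⟩
  set s := a ^ ((1 : ℝ) / 42)
  have hs : 0 ≤ s := by positivity
  have h7 : s ^ 6 = a ^ ((1 : ℝ) / 7) := by
    rw [← rpow_natCast, ← rpow_mul ha.le]; norm_num
  have h6 : s ^ 7 = a ^ ((1 : ℝ) / 6) := by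
    rw [← rpow_natCast, ← rpow_mul ha.le]; norm_num
  have h2 : (s ^ 7) ^ 12 = a ^ 2 := by
    rw [h6, ← rpow_natCast, ← rpow_mul ha.le]; norm_num
  have hdecay := pow_mul_exp_neg_mul_le (half_pos hc) (pow_nonneg hs 7) 12
  rw [h2] at hdecay
  rw [← h7, ← h6, le_div_iff₀ (by positivity)]
  calc exp (A * s ^ 6 - c * s ^ 7) * a ^ 2
      ≤ exp (C + -(c / 2 * s ^ 7)) * a ^ 2 := by
        gcongr; linarith [hC s hs]
    _ = exp C * (a ^ 2 * exp (-(c / 2 * s ^ 7))) := by rw [exp_add]; ring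
    _ ≤ exp C * (Nat.factorial 12 / (c / 2) ^ 12) := by gcongr

lemma one_div_min_sq_le {u v : ℝ} (hu : 0 < u) (hv : 0 < v) :
    1 / min u v ^ 2 ≤ 1 / u ^ 2 + 1 / v ^ 2 := by
  rcases min_cases u v with ⟨h, -⟩ | ⟨h, -⟩ <;> rw [h] <;>
    simp only [le_add_iff_nonneg_right, le_add_iff_nonneg_left] <;> positivity

lemma exists_tilted_term_le {γ c : ℝ} (hγ : 0 ≤ γ) (hc : 0 < c) :
    ∃ K, 0 ≤ K ∧ ∀ n k : ℕ, 0 < n → k ≤ n → ⌈log n ^ 7⌉₊ ≤ k →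
      (n : ℝ) ^ (γ * ((n : ℝ) - k) / n) *
          exp (-c * (min ((k : ℝ) + 1) ((n : ℝ) - k + 1) ^ ((1 : ℝ) / 6) - 1)) ≤
        K * (1 / ((k : ℝ) + 1) ^ 2 + 1 / ((n : ℝ) - k + 1) ^ 2) := by
  obtain ⟨K, hK0, hK⟩ := exists_exp_rpow_sub_rpow_le (7 * γ) hc
  refine ⟨exp c * K, by positivity, fun n k hn hkn hk => ?_⟩
  have hkn' : (k : ℝ) ≤ n := by exact_mod_cast hkn
  set a := min ((k : ℝ) + 1) ((n : ℝ) - k + 1)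
  have ha : 0 < a := lt_min (by positivity) (by linarith)
  have htilt := log_mul_sub_div_le_min_rpow hn hkn hk
  calc (n : ℝ) ^ (γ * ((n : ℝ) - k) / n) * exp (-c * (a ^ ((1 : ℝ) / 6) - 1))
      = exp c * exp (γ * (log n * (((n : ℝ) - k) / n)) - c * a ^ ((1 : ℝ) / 6)) := by
        rw [rpow_def_of_pos (by exact_mod_cast hn), ← exp_add, ← exp_add]; ring_nf
    _ ≤ exp c * exp (7 * γ * a ^ ((1 : ℝ) / 7) - c * a ^ ((1 : ℝ) / 6)) := by
        have := mul_le_mul_of_nonneg_left htilt hγ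
        gcongr exp c * ?_
        exact exp_le_exp.2 (by linarith)
    _ ≤ exp c * (K / a ^ 2) := by gcongr; exact hK a ha
    _ ≤ exp c * K * (1 / ((k : ℝ) + 1) ^ 2 + 1 / ((n : ℝ) - k + 1) ^ 2) := by
        rw [mul_assoc, div_eq_mul_one_div K]
        gcongr
        exact one_div_min_sq_le (by positivity) (by linarith)

lemma sum_range_one_div_succ_sq_le (N : ℕ) :
    ∑ k ∈ range N, 1 / ((k : ℝ) + 1) ^ 2 ≤ 2 := by
  have h := sum_Ioo_inv_sq_le (α := ℝ) 0 (N + 1)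
  rw [← Finset.Ico_succ_left_eq_Ioo, Nat.succ_eq_succ, sum_Ico_eq_sum_range] at h
  simpa [add_comm] using h

lemma sum_range_one_div_sq_add_reflect_le (n : ℕ) :
    ∑ k ∈ range (n + 1), (1 / ((k : ℝ) + 1) ^ 2 + 1 / ((n : ℝ) - k + 1) ^ 2) ≤ 4 := by
  have hreflect : ∑ k ∈ range (n + 1), 1 / ((n : ℝ) - k + 1) ^ 2 =
      ∑ k ∈ range (n + 1), 1 / ((k : ℝ) + 1) ^ 2 := by
    rw [← sum_range_reflect]
    refine sum_congr rfl fun k hk => ?_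
    rw [Nat.add_sub_cancel, Nat.cast_sub (by simpa [Nat.lt_succ_iff] using hk), sub_sub_cancel]
  rw [sum_add_distrib, hreflect]
  linarith [sum_range_one_div_succ_sq_le (n + 1)]

/-- The key analytic estimate in the second-moment bound (Proposition `EZn2`):
the sums `Σ_{k=⌈(log n)^7⌉}^{n} n^{γ (n-k) / n} exp(-c ((min(k+1, n-k+1))^{1/6} - 1))`
are bounded uniformly in `n ≥ 3`. -/
theorem second_moment_tail_sum_bounded (γ c : ℝ) (hγ : 0 < γ) (hc : 0 < c) :
    ∃ B : ℝ, ∀ n : ℕ, 3 ≤ n →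
      (∑ k ∈ Finset.Icc ⌈Real.log n ^ 7⌉₊ n,
          (n : ℝ) ^ (γ * ((n : ℝ) - (k : ℝ)) / (n : ℝ)) *
            Real.exp (-c *
              ((min ((k : ℝ) + 1) ((n : ℝ) - (k : ℝ) + 1)) ^ ((1 : ℝ) / 6) - 1)))
        ≤ B := by
  obtain ⟨K, hK0, hK⟩ := exists_tilted_term_le hγ.le hc
  refine ⟨K * 4, fun n hn => ?_⟩
  calc _ ≤ ∑ k ∈ Icc ⌈log n ^ 7⌉₊ n,
          K * (1 / ((k : ℝ) + 1) ^ 2 + 1 / ((n : ℝ) - k + 1) ^ 2) :=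
        sum_le_sum fun k hk => hK n k (by omega) (mem_Icc.1 hk).2 (mem_Icc.1 hk).1
    _ ≤ ∑ k ∈ range (n + 1), K * (1 / ((k : ℝ) + 1) ^ 2 + 1 / ((n : ℝ) - k + 1) ^ 2) :=
        sum_le_sum_of_subset_of_nonneg
          (fun k hk => by simp only [mem_Icc, mem_range] at hk ⊢; omega)
          fun _ _ _ => by positivity
    _ ≤ K * 4 := by
        rw [← mul_sum]
        exact mul_le_mul_of_nonneg_left (sum_range_one_div_sq_add_reflect_le n) hK0
end
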